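/- arXiv:2412.08989 — 4 statements merged into one kernel-verified Lean document; each statement's English description precedes it below -/
import Mathlib

section
/- Let U₁,…,U₈ be an interleaved double chain of words with |U₁| ≥ |U₂| + |U₄|. Then there exist words W₁ and W₅ such that U₁ = U₆⁻¹ W₁ U₄⁻¹ and U₅ = U₂⁻¹ W₅ U₈⁻¹, and the chain W₅⁻¹ : U₂ : U₃ : U₄ : W₁⁻¹ : U₆ : U₇ : U₈ is again an interleaved double chain. -/
/-!
Comparing lengths in the chain equations gives |U (i + 4)| = |U i|. The equations at i - 1 and i
show that U i ends with U (i + 3)⁻¹ and begins with U (i + 5)⁻¹, so the length hypothesis (and its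
shift by 4) lets us cut U 1 and U 5 as stated. Substituting both factorizations into the chain
equations at 1 and 0 and cancelling the common outer factors yields the new equations at 0 and 1;
those at 2 and 3 are unchanged, and the equation at i + 4 is the reversal of the one at i.
-/

/-- Letterwise reversal of a word over an alphabet with reversal `inv`. -/
def wrev {A : Type*} (inv : A → A) (W : List A) : List A := (W.map inv).reverse

/-- An interleaved double chain (indices mod 8). -/
def IDC {A : Type*} (inv : A → A) (U : ZMod 8 → List A) : Prop :=
  ∀ i : ZMod 8, U i ++ U (i + 1) = wrev inv (U (i + 4) ++ U (i + 5))

theorem List.exists_eq_append_append_of_isPrefix_of_isSuffix {α : Type*} {a b l : List α}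
    (ha : a <+: l) (hb : b <:+ l) (hlen : a.length + b.length ≤ l.length) :
    ∃ w, l = a ++ w ++ b := by
  obtain ⟨x, rfl⟩ := ha
  obtain ⟨w, rfl⟩ : b <:+ x :=
    suffix_of_suffix_length_le hb (suffix_append a x) (by simp at hlen; omega)
  exact ⟨w, by simp⟩

section wrev

variable {A : Type*} (inv : A → A)

@[simp]
theorem wrev_append (X Y : List A) : wrev inv (X ++ Y) = wrev inv Y ++ wrev inv X := by
  simp [wrev]

@[simp]
theorem length_wrev (X : List A) : (wrev inv X).length = X.length := by
  simp [wrev]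

variable {inv}

@[simp]
theorem wrev_wrev (hinv : Function.Involutive inv) (X : List A) : wrev inv (wrev inv X) = X := by
  simp [wrev, List.map_reverse, hinv.comp_self]

theorem eq_wrev_comm (hinv : Function.Involutive inv) {X Y : List A} :
    X = wrev inv Y ↔ Y = wrev inv X := by
  constructor <;> rintro rfl <;> exact (wrev_wrev hinv _).symm

end wrev

namespace IDC

variable {A : Type*} {inv : A → A} {U : ZMod 8 → List A}

theorem append_eq (hU : IDC inv U) (i : ZMod 8) :
    U i ++ U (i + 1) = wrev inv (U (i + 5)) ++ wrev inv (U (i + 4)) := by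
  rw [hU i, wrev_append]

theorem length_add_four (hU : IDC inv U) (i : ZMod 8) : (U (i + 4)).length = (U i).length := by
  have h : ∀ j, (U j).length + (U (j + 1)).length = (U (j + 5)).length + (U (j + 4)).length :=
    fun j => by simpa using congrArg List.length (hU.append_eq j)
  have h0 := h i; have h1 := h (i + 1); have h2 := h (i + 2); have h3 := h (i + 3)
  norm_num [add_assoc] at h1 h2 h3
  rw [show (8 : ZMod 8) = 0 from rfl, add_zero] at h3
  -- `d j := |U j| - |U (j + 4)|` satisfies `d j + d (j + 1) = 0` and `d (j + 4) = - d j`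
  omega

theorem exists_eq_wrev_append_append_wrev (hU : IDC inv U) (i : ZMod 8)
    (hlen : (U (i + 5)).length + (U (i + 3)).length ≤ (U i).length) :
    ∃ W, U i = wrev inv (U (i + 5)) ++ W ++ wrev inv (U (i + 3)) := by
  have hprev := hU.append_eq (i - 1)
  rw [sub_add_cancel, show i - 1 + 5 = i + 4 by ring, show i - 1 + 4 = i + 3 by ring] at hprev
  refine List.exists_eq_append_append_of_isPrefix_of_isSuffix ?_ ?_ (by simpa using hlen)
  · refine List.prefix_of_prefix_length_le ?_ (List.prefix_append _ (U (i + 1))) (by simp; omega)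
    rw [hU.append_eq i]
    exact List.prefix_append _ _
  · refine List.suffix_of_suffix_length_le ?_ (List.suffix_append (U (i - 1)) _) (by simp; omega)
    rw [hprev]
    exact List.suffix_append _ _

theorem of_four (hinv : Function.Involutive inv)
    (h0 : U 0 ++ U 1 = wrev inv (U 4 ++ U 5)) (h1 : U 1 ++ U 2 = wrev inv (U 5 ++ U 6))
    (h2 : U 2 ++ U 3 = wrev inv (U 6 ++ U 7)) (h3 : U 3 ++ U 4 = wrev inv (U 7 ++ U 0)) :
    IDC inv U := by
  intro i
  fin_cases i
  exacts [h0, h1, h2, h3, (eq_wrev_comm hinv).1 h0, (eq_wrev_comm hinv).1 h1,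
    (eq_wrev_comm hinv).1 h2, (eq_wrev_comm hinv).1 h3]

end IDC

theorem stmt1 {A : Type*} (inv : A → A) (hinv : Function.Involutive inv)
    (U : ZMod 8 → List A) (hU : IDC inv U)
    (hlen : (U 2).length + (U 4).length ≤ (U 1).length) :
    ∃ W₁ W₅ : List A,
      U 1 = wrev inv (U 6) ++ W₁ ++ wrev inv (U 4) ∧
      U 5 = wrev inv (U 2) ++ W₅ ++ wrev inv (U 8) ∧
      IDC inv (fun i : ZMod 8 =>
        if i = 1 then wrev inv W₅ else if i = 5 then wrev inv W₁ else U i) := by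
  have h0 : (U 4).length = (U 0).length := hU.length_add_four 0
  have h5 : (U 5).length = (U 1).length := hU.length_add_four 1
  have h6 : (U 6).length = (U 2).length := hU.length_add_four 2
  obtain ⟨W₁, hW₁⟩ : ∃ W, U 1 = wrev inv (U 6) ++ W ++ wrev inv (U 4) :=
    hU.exists_eq_wrev_append_append_wrev 1 (show (U 6).length + (U 4).length ≤ _ by omega)
  obtain ⟨W₅, hW₅⟩ : ∃ W, U 5 = wrev inv (U 2) ++ W ++ wrev inv (U 0) :=
    hU.exists_eq_wrev_append_append_wrev 5 (show (U 2).length + (U 0).length ≤ _ by omega)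
  refine ⟨W₁, W₅, hW₁, hW₅, IDC.of_four hinv ?_ ?_ (hU 2) (hU 3)⟩
  · show U 0 ++ wrev inv W₅ = wrev inv (U 4 ++ wrev inv W₁)
    have e1 : U 1 ++ U 2 = wrev inv (U 6) ++ wrev inv (U 5) := hU.append_eq 1
    simp only [hW₁, hW₅, wrev_append, wrev_wrev hinv, List.append_assoc,
      List.append_cancel_left_eq] at e1
    simpa only [wrev_append, wrev_wrev hinv, ← List.append_assoc, List.append_cancel_right_eq]
      using e1.symm
  · show wrev inv W₅ ++ U 2 = wrev inv (wrev inv W₁ ++ U 6)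
    have e0 : U 0 ++ U 1 = wrev inv (U 5) ++ wrev inv (U 4) := hU.append_eq 0
    simp only [hW₁, hW₅, wrev_append, wrev_wrev hinv, List.append_assoc,
      List.append_cancel_left_eq] at e0
    simpa only [wrev_append, wrev_wrev hinv, ← List.append_assoc, List.append_cancel_right_eq]
      using e0.symm
end

section
/- Let S and S' be closed polygonal curves in the plane such that S' is a translate of the reversal of S. If the winding number is defined for points off the curves, then wind(P, S) + wind(P', S') = 0 whenever P' is the corresponding translate of P; in particular, for a polyline chain A₊ B₊ A₋ B₋ realizing the template A B A⁻¹ B⁻¹ with u = span(A), v = span(B), the enclosed oriented area equals u × v (the cross product x₁y₂ − y₁x₂). -/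
open Complex

/-- Contribution of the segment from `a` to `b` to the winding integral about `p`. -/
noncomputable def segWind (p a b : ℂ) : ℂ :=
  ∫ t in (0:ℝ)..1, (b - a) / (a + (t : ℂ) * (b - a) - p)

/-- Winding number of the closed polyline with vertex list `L` about the point `p`,
defined by the Cauchy integral `(2πi)⁻¹ ∮ dz/(z - p)`. -/
noncomputable def wind (p : ℂ) (L : List ℂ) : ℂ :=
  (2 * (Real.pi : ℂ) * Complex.I)⁻¹ *
    ((L.zip L.tail).map (fun q => segWind p q.1 q.2)).sum

/-- `p` lies on the polyline with vertex list `L`. -/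
def OnPolyline (p : ℂ) (L : List ℂ) : Prop :=
  ∃ q ∈ L.zip L.tail, p ∈ segment ℝ q.1 q.2

/-- Cross product of plane vectors (viewed as complex numbers). -/
def cross (u v : ℂ) : ℝ := u.re * v.im - u.im * v.re

/-- Oriented enclosed area of a closed polyline (shoelace formula). -/
noncomputable def polyArea (L : List ℂ) : ℝ :=
  (1 / 2) * ((L.zip L.tail).map (fun q => cross q.1 q.2)).sum

/-! Reversing a polyline swaps the endpoints of every edge, which negates each edge integral and
each shoelace term, while translating the point together with the curve leaves the edge integrals
unchanged; so the winding numbers cancel. For the area, the shoelace sum is additive over the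
concatenation because the junction terms are `a × a = 0`, and translating a chain by `w` adds
`w × (last - first)` by telescoping. The junctions force the two translations to be `σ(B)` and
`-σ(A)`, and the four pieces sum to `2 σ(A) × σ(B)`. -/

section ListEnds

variable {α β : Type*} [Inhabited α] [Inhabited β]

lemma List.head!_map_reverse (f : α → β) {L : List α} (h : L ≠ []) :
    (L.reverse.map f).head! = f L.getLast! := by
  simp [List.head!_eq_head?_getD, List.getLast?_eq_some_getLast h]

lemma List.getLast!_map_reverse (f : α → β) {L : List α} (h : L ≠ []) :
    (L.reverse.map f).getLast! = f L.head! := by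
  simp [List.head!_eq_head?_getD, List.head?_eq_some_head h]

lemma List.getLast!_append_of_ne_nil (L : List α) {K : List α} (h : K ≠ []) :
    (L ++ K).getLast! = K.getLast! := by
  simp [List.getLast?_eq_some_getLast h]

end ListEnds

section EdgeSum

variable {α β M : Type*} [AddCommMonoid M]

def edgeSum (f : α → α → M) (L : List α) : M :=
  ((L.zip L.tail).map fun q => f q.1 q.2).sum

variable (f : α → α → M)

@[simp] lemma edgeSum_nil : edgeSum f [] = 0 := rfl

@[simp] lemma edgeSum_singleton (a : α) : edgeSum f [a] = 0 := rfl

@[simp] lemma edgeSum_cons_cons (a b : α) (L : List α) :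
    edgeSum f (a :: b :: L) = f a b + edgeSum f (b :: L) := by
  simp [edgeSum]

lemma edgeSum_add (g : α → α → M) (L : List α) :
    edgeSum (fun a b => f a b + g a b) L = edgeSum f L + edgeSum g L :=
  List.sum_map_add

lemma edgeSum_map (g : β → α) : ∀ L : List β,
    edgeSum f (L.map g) = edgeSum (fun a b => f (g a) (g b)) L
  | [] | [_] => rfl
  | a :: b :: L => by
    rw [List.map_cons, List.map_cons, edgeSum_cons_cons, ← List.map_cons, edgeSum_map g (b :: L),
      edgeSum_cons_cons]

lemma edgeSum_append [Inhabited α] : ∀ {L K : List α}, L ≠ [] → K ≠ [] →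
    edgeSum f (L ++ K) = edgeSum f L + f L.getLast! K.head! + edgeSum f K
  | [_], _ :: _, _, _ => by simp
  | a :: b :: L, K, _, hK => by
    rw [List.cons_append, List.cons_append, edgeSum_cons_cons, ← List.cons_append,
      edgeSum_append (List.cons_ne_nil b L) hK, edgeSum_cons_cons]
    simp [add_assoc]

lemma edgeSum_append_of_getLast!_eq_head! [Inhabited α] (hf : ∀ a, f a a = 0) {L K : List α}
    (hL : L ≠ []) (hK : K ≠ []) (h : L.getLast! = K.head!) :
    edgeSum f (L ++ K) = edgeSum f L + edgeSum f K := by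
  rw [edgeSum_append f hL hK, h, hf, add_zero]

lemma edgeSum_reverse [Inhabited α] : ∀ L : List α,
    edgeSum f L.reverse = edgeSum (fun a b => f b a) L
  | [] | [_] => rfl
  | a :: b :: L => by
    rw [List.reverse_cons, edgeSum_append f (by simp) (by simp), edgeSum_reverse (b :: L)]
    simp [add_comm]

end EdgeSum

section EdgeSumGroup

variable {α G : Type*} [AddCommGroup G]

lemma edgeSum_neg (f : α → α → G) (L : List α) :
    edgeSum (fun a b => -f a b) L = -edgeSum f L := by
  rw [edgeSum, edgeSum, ← negAddMonoidHom_apply, map_list_sum, List.map_map]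
  rfl

lemma edgeSum_telescope [Inhabited α] (g : α → G) :
    ∀ {L : List α}, L ≠ [] → edgeSum (fun a b => g b - g a) L = g L.getLast! - g L.head!
  | [_], _ => by simp
  | a :: b :: L, _ => by
    rw [edgeSum_cons_cons, edgeSum_telescope g (List.cons_ne_nil b L)]
    simp

end EdgeSumGroup

lemma segWind_add_add (p u a b : ℂ) : segWind (p + u) (a + u) (b + u) = segWind p a b := by
  rw [segWind, segWind, add_sub_add_right_eq_sub]
  congr 1 with t
  ring_nf

lemma segWind_swap (p a b : ℂ) : segWind p b a = -segWind p a b := by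
  have h := intervalIntegral.integral_comp_sub_left (a := 0) (b := 1)
    (fun t : ℝ => (b - a) / (a + (t : ℂ) * (b - a) - p)) 1
  simp only [sub_self, sub_zero, ofReal_sub, ofReal_one] at h
  rw [segWind, segWind, ← h, ← intervalIntegral.integral_neg]
  congr 1 with t
  rw [← neg_div]
  congr 1 <;> ring

lemma wind_map_add_reverse (p u : ℂ) (S : List ℂ) :
    wind (p + u) (S.reverse.map (· + u)) = -wind p S := by
  change _ * edgeSum (segWind (p + u)) _ = -(_ * edgeSum (segWind p) S)
  have hswap : (fun a b => segWind (p + u) (b + u) (a + u)) = fun a b => -segWind p a b := by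
    ext a b
    rw [segWind_add_add, segWind_swap]
  rw [edgeSum_map, edgeSum_reverse, hswap, edgeSum_neg, mul_neg]

lemma cross_self_eq_zero (a : ℂ) : cross a a = 0 := by
  simp [cross, mul_comm]

lemma cross_swap (a b : ℂ) : cross b a = -cross a b := by
  simp only [cross]
  ring

lemma cross_add_add (a b w : ℂ) : cross (a + w) (b + w) = cross a b + (cross w b - cross w a) := by
  simp only [cross, add_re, add_im]
  ring

lemma edgeSum_cross_reverse (L : List ℂ) : edgeSum cross L.reverse = -edgeSum cross L := by
  rw [edgeSum_reverse, ← edgeSum_neg]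
  exact congrArg (edgeSum · L) (funext₂ fun a b => cross_swap a b)

lemma edgeSum_cross_map_add (w : ℂ) {L : List ℂ} (h : L ≠ []) :
    edgeSum cross (L.map (· + w)) = edgeSum cross L + (cross w L.getLast! - cross w L.head!) := by
  rw [edgeSum_map]
  simp only [cross_add_add]
  rw [edgeSum_add, edgeSum_telescope (cross w) h]

lemma edgeSum_cross_map_add_reverse (w : ℂ) {L : List ℂ} (h : L ≠ []) :
    edgeSum cross (L.reverse.map (· + w)) =
      -edgeSum cross L + (cross w L.head! - cross w L.getLast!) := by
  rw [edgeSum_cross_map_add w (List.reverse_ne_nil_iff.mpr h), edgeSum_cross_reverse]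
  simp [List.head!_eq_head?_getD, List.getLast?_eq_some_getLast h, List.head?_eq_some_head h]

/-- (1) If the closed polyline `S'` is a translate (by `u`) of the reversal of the
closed polyline `S`, then for points off the curve the winding numbers of
corresponding points sum to zero.  (2) In particular, a closed chain
`A₊ B₊ A₋ B₋` realizing the template `A B A⁻¹ B⁻¹` encloses oriented area
`σ(A) × σ(B)`. -/
theorem stmt8 :
    (∀ (S : List ℂ) (u p : ℂ), S ≠ [] → S.getLast! = S.head! →
      ¬ OnPolyline p S →
      wind p S + wind (p + u) ((S.reverse).map (· + u)) = 0) ∧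
    (∀ (Ap Bp Am Bm : List ℂ) (w w' : ℂ),
      Ap ≠ [] → Bp ≠ [] →
      Am = (Ap.reverse).map (· + w) → Bm = (Bp.reverse).map (· + w') →
      Ap.getLast! = Bp.head! → Bp.getLast! = Am.head! →
      Am.getLast! = Bm.head! → Bm.getLast! = Ap.head! →
      polyArea (Ap ++ Bp ++ Am ++ Bm) =
        cross (Ap.getLast! - Ap.head!) (Bp.getLast! - Bp.head!)) := by
  refine ⟨fun S u p _ _ _ => by rw [wind_map_add_reverse, add_neg_cancel], ?_⟩
  rintro Ap Bp Am Bm w w' hA hB rfl rfl hAB hBA hAB' -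
  have hAm : Ap.reverse.map (· + w) ≠ [] := by simpa using hA
  have hBm : Bp.reverse.map (· + w') ≠ [] := by simpa using hB
  have hw : w = Bp.getLast! - Ap.getLast! := by
    rw [hBA, List.head!_map_reverse _ hA]
    ring
  have hw' : w' = Ap.head! - Ap.getLast! := by
    rw [List.getLast!_map_reverse _ hA, List.head!_map_reverse _ hB] at hAB'
    linear_combination hw - hAB'
  change 1 / 2 * edgeSum cross _ = _
  rw [edgeSum_append_of_getLast!_eq_head! cross cross_self_eq_zero (by simp [hA]) hBm
      (by rwa [List.getLast!_append_of_ne_nil _ hAm]),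
    edgeSum_append_of_getLast!_eq_head! cross cross_self_eq_zero (by simp [hA]) hAm
      (by rwa [List.getLast!_append_of_ne_nil _ hB]),
    edgeSum_append_of_getLast!_eq_head! cross cross_self_eq_zero hA hB hAB,
    edgeSum_cross_map_add_reverse w hA, edgeSum_cross_map_add_reverse w' hB, ← hAB, hw, hw']
  simp only [cross, sub_re, sub_im]
  ring
end

section
/- Let U be an interleaved double chain of words with type (a₁,a₂,a₃,a₄). Then the composite transform g*_Odd = g_Odd ∘ f_Even is total: the f_Even-lift V = f₂(f₄(U)) has type (b₁,b₂,b₃,b₄) with b_i = a_i for odd i and b_i = a_{i−1}+a_i+a_{i+1} for even i, which satisfies b_i ≤ b_{i−1}+b_{i+1} for all odd i and b₁+b₃ ≤ b₂+b₄; hence g_Odd(f_Even(U)) is well defined and is a g_Odd-lift. -/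
/-- The `f_k`-lift: for `j ≡ k (mod 4)` replace `U_j` by `(U_{j+3}U_{j+4}U_{j+5})⁻¹`,
and keep the remaining parts. -/
def flift {A : Type*} (inv : A → A) (k : ZMod 8) (U : ZMod 8 → List A) :
    ZMod 8 → List A :=
  fun j =>
    if j = k ∨ j = k + 4 then wrev inv (U (j + 3) ++ U (j + 4) ++ U (j + 5)) else U j


/-!
Comparing lengths in the chain relations `U_i U_{i+1} = (U_{i+4} U_{i+5})⁻¹` gives
`a_i + a_{i+1} = a_{i+4} + a_{i+5}`; the alternating sum of four consecutive such relations is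
`2 a_i = 2 a_{i+4}`, so the lengths are 4-periodic. The `f_Even`-lift keeps the odd parts and
replaces an even part `U_j` by a word of length `a_{j+3} + a_{j+4} + a_{j+5} = a_{j-1} + a_j + a_{j+1}`,
and both inequalities hold because each odd `b_i = a_i` is a summand of its even neighbours.
-/

theorem periodic_four_of_pair_sums {a : ZMod 8 → ℕ}
    (h : ∀ i, a i + a (i + 1) = a (i + 4) + a (i + 5)) : Function.Periodic a 4 := by
  intro i
  have h0 := h i
  have h1 := h (i + 1)
  have h2 := h (i + 2)
  have h3 := h (i + 3)
  ring_nf at h0 h1 h2 h3 ⊢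
  reduce_mod_char at h3
  omega

section

variable {A : Type*} {inv : A → A} {U : ZMod 8 → List A}

theorem IDC.length_add_length (hU : IDC inv U) (i : ZMod 8) :
    (U i).length + (U (i + 1)).length = (U (i + 4)).length + (U (i + 5)).length := by
  have h := congrArg List.length (hU i)
  simp only [wrev, List.length_append, List.length_reverse, List.length_map] at h
  omega

theorem length_flift (k j : ZMod 8) :
    (flift inv k U j).length = if j = k ∨ j = k + 4 then
      (U (j + 3)).length + (U (j + 4)).length + (U (j + 5)).length else (U j).length := by
  unfold flift
  split_ifs <;> simp only [wrev, List.length_append, List.length_reverse, List.length_map]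

theorem length_fEven_of_odd {j : ZMod 8} (hj : j = 1 ∨ j = 3 ∨ j = 5 ∨ j = 7) :
    (flift inv 2 (flift inv 4 U) j).length = (U j).length := by
  rcases hj with rfl | rfl | rfl | rfl <;> simp +decide [length_flift]

theorem IDC.length_fEven_of_even (hU : IDC inv U) {j : ZMod 8}
    (hj : j = 0 ∨ j = 2 ∨ j = 4 ∨ j = 6) :
    (flift inv 2 (flift inv 4 U) j).length =
      (U (j - 1)).length + (U j).length + (U (j + 1)).length := by
  have hlift : (flift inv 2 (flift inv 4 U) j).length =
      (U (j + 3)).length + (U (j + 4)).length + (U (j + 5)).length := by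
    rcases hj with rfl | rfl | rfl | rfl <;>
      simp only [length_flift] <;> reduce_mod_char <;> simp +decide
  have hper : Function.Periodic (fun i => (U i).length) 4 :=
    periodic_four_of_pair_sums hU.length_add_length
  have h₁ := hper (j - 1)
  have h₂ := hper j
  have h₃ := hper (j + 1)
  ring_nf at hlift h₁ h₂ h₃ ⊢
  omega

end

theorem stmt13_general {A : Type*} (inv : A → A)
    (U : ZMod 8 → List A) (hU : IDC inv U) :
    ∀ V : ZMod 8 → List A, V = flift inv 2 (flift inv 4 U) →
      (∀ i : ZMod 8, i = 1 ∨ i = 3 ∨ i = 5 ∨ i = 7 →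
        (V i).length = (U i).length) ∧
      (∀ i : ZMod 8, i = 0 ∨ i = 2 ∨ i = 4 ∨ i = 6 →
        (V i).length = (U (i - 1)).length + (U i).length + (U (i + 1)).length) ∧
      (∀ i : ZMod 8, i = 1 ∨ i = 3 ∨ i = 5 ∨ i = 7 →
        (V i).length ≤ (V (i - 1)).length + (V (i + 1)).length) ∧
      (V 1).length + (V 3).length ≤ (V 2).length + (V 4).length := by
  rintro V rfl
  refine ⟨fun i => length_fEven_of_odd, fun i => hU.length_fEven_of_even, ?_, ?_⟩
  · intro i hi
    have hsucc : i + 1 = 0 ∨ i + 1 = 2 ∨ i + 1 = 4 ∨ i + 1 = 6 := by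
      rcases hi with rfl | rfl | rfl | rfl <;> decide
    rw [length_fEven_of_odd hi, hU.length_fEven_of_even hsucc, add_sub_cancel_right]
    omega
  · have h2 := hU.length_fEven_of_even (j := 2) (by decide)
    norm_num at h2
    rw [length_fEven_of_odd (j := 1) (by decide), length_fEven_of_odd (j := 3) (by decide), h2]
    omega

/-- The `f_Even`-lift `V = f₂(f₄(U))` of an interleaved double chain has type
`b_i = a_i` for odd `i` and `b_i = a_{i-1} + a_i + a_{i+1}` for even `i`, and this
type satisfies `b_i ≤ b_{i-1} + b_{i+1}` for all odd `i` and `b₁ + b₃ ≤ b₂ + b₄`;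
hence `g_Odd(f_Even(U))` is well defined and is a `g_Odd`-lift. -/
theorem stmt13 {A : Type*} (inv : A → A) (hinv : Function.Involutive inv)
    (U : ZMod 8 → List A) (hU : IDC inv U) :
    ∀ V : ZMod 8 → List A, V = flift inv 2 (flift inv 4 U) →
      (∀ i : ZMod 8, i = 1 ∨ i = 3 ∨ i = 5 ∨ i = 7 →
        (V i).length = (U i).length) ∧
      (∀ i : ZMod 8, i = 0 ∨ i = 2 ∨ i = 4 ∨ i = 6 →
        (V i).length = (U (i - 1)).length + (U i).length + (U (i + 1)).length) ∧
      (∀ i : ZMod 8, i = 1 ∨ i = 3 ∨ i = 5 ∨ i = 7 →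
        (V i).length ≤ (V (i - 1)).length + (V (i + 1)).length) ∧
      (V 1).length + (V 3).length ≤ (V 2).length + (V 4).length :=
  stmt13_general inv U hU
end

section
/- Let κ(t) denote a horizontal segment of length t > 0 (as a translation class of oriented polylines). If a, b > 0 and the interleaved double chain of floating polylines F(a,b) = κ(a) : κ(b) : ε : ε : κ(a)⁻¹ : κ(b)⁻¹ : ε : ε is alphabetisable (i.e., there is a finite alphabet with reversal A, a valuation ψ assigning a nonempty floating polyline to each letter with ψ(w⁻¹) = ψ(w)⁻¹, and an interleaved double chain U of words over A with ψ(U_i) representing the i-th part of F(a,b) for all i), then a/b is rational. -/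
/-- Reversal of a floating polyline, represented by its list of edge vectors. -/
def prev (L : List (ℝ × ℝ)) : List (ℝ × ℝ) := (L.map (fun e => -e)).reverse

/-- Value of a valuation on a word: the concatenation of the letter polylines. -/
def psiW {A : Type*} (ψ : A → List (ℝ × ℝ)) (W : List A) : List (ℝ × ℝ) :=
  (W.map ψ).flatten

/-!
The conditions of the chain at indices 0 and 2 say `U 1 = (U 5)⁻¹` and `U 2 = (U 6)⁻¹`, and
at index 1 they then say that `U 1` and `U 2` commute. Commuting words are powers of a common
word (the Euclidean algorithm on their lengths), so `a` and `b`, the horizontal lengths of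
their values, are integer multiples of the length of that common word.
-/

namespace List

variable {α : Type*}

theorem exists_eq_append_of_append_comm {X Y : List α} (h : X ++ Y = Y ++ X)
    (hle : X.length ≤ Y.length) : ∃ Y', Y = X ++ Y' ∧ X ++ Y' = Y' ++ X := by
  have hpre : X <+: Y :=
    prefix_of_prefix_length_le (h ▸ prefix_append X Y) (prefix_append Y X) hle
  obtain ⟨Y', rfl⟩ := hpre
  refine ⟨Y', rfl, append_cancel_left (as := X) ?_⟩
  simpa only [append_assoc] using h

/-- The Lyndon–Schützenberger theorem. -/
theorem exists_flatten_replicate_of_append_comm {X Y : List α} (h : X ++ Y = Y ++ X) :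
    ∃ (Z : List α) (m n : ℕ), X = (replicate m Z).flatten ∧ Y = (replicate n Z).flatten := by
  induction hN : X.length + Y.length using Nat.strong_induction_on generalizing X Y with
  | _ N ih =>
  wlog hle : X.length ≤ Y.length generalizing X Y
  · obtain ⟨Z, m, n, hY, hX⟩ := this h.symm (by omega) (by omega)
    exact ⟨Z, n, m, hX, hY⟩
  rcases X.eq_nil_or_concat' with rfl | ⟨_, _, rfl⟩
  · exact ⟨Y, 0, 1, rfl, by simp⟩
  obtain ⟨Y', rfl, h'⟩ := exists_eq_append_of_append_comm h hle
  obtain ⟨Z, m, n, hX, hY'⟩ := ih _ (by simp at hN ⊢; omega) h' rfl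
  exact ⟨Z, m, m + n, hX, by rw [hX, hY', replicate_add, flatten_append]⟩

theorem exists_rat_eq_mul_of_append_comm (f : List α → ℝ)
    (hf : ∀ X Y, f (X ++ Y) = f X + f Y) {X Y : List α} (h : X ++ Y = Y ++ X)
    (hY : f Y ≠ 0) : ∃ q : ℚ, f X = q * f Y := by
  have hpow (m : ℕ) (Z : List α) : f (replicate m Z).flatten = m * f Z := by
    induction m with
    | zero => simpa using hf [] []
    | succ m ih => rw [replicate_succ', flatten_concat, hf, ih]; push_cast; ring
  obtain ⟨Z, m, n, rfl, rfl⟩ := exists_flatten_replicate_of_append_comm h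
  simp only [hpow] at hY ⊢
  refine ⟨m / n, ?_⟩
  have hn : (n : ℝ) ≠ 0 := left_ne_zero_of_mul hY
  push_cast
  field_simp

end List

theorem IDC.append_comm {A : Type*} {inv : A → A} {U : ZMod 8 → List A} (hU : IDC inv U)
    (h0 : U 0 = []) (h3 : U 3 = []) (h4 : U 4 = []) (h7 : U 7 = []) :
    U 1 ++ U 2 = U 2 ++ U 1 := by
  have e0 := hU 0
  have e1 := hU 1
  have e2 := hU 2
  norm_num [h0, h3, h4, h7, wrev] at e0 e1 e2
  simpa [e0, e2, wrev] using e1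

theorem psiW_append {A : Type*} (ψ : A → List (ℝ × ℝ)) (X Y : List A) :
    psiW ψ (X ++ Y) = psiW ψ X ++ psiW ψ Y := by
  simp [psiW]

theorem stmt17_general (a b : ℝ) (hb : 0 < b)
    (halph : ∃ (A : Type) (_ : Fintype A) (inv : A → A)
        (_ : Function.Involutive inv) (ψ : A → List (ℝ × ℝ)) (U : ZMod 8 → List A),
      (∀ w : A, ψ w ≠ []) ∧
      (∀ w : A, ψ (inv w) = prev (ψ w)) ∧
      IDC inv U ∧
      (∀ e ∈ psiW ψ (U 1), e.2 = 0 ∧ 0 < e.1) ∧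
      ((psiW ψ (U 1)).map Prod.fst).sum = a ∧
      (∀ e ∈ psiW ψ (U 2), e.2 = 0 ∧ 0 < e.1) ∧
      ((psiW ψ (U 2)).map Prod.fst).sum = b ∧
      U 3 = [] ∧ U 4 = [] ∧
      (∀ e ∈ psiW ψ (U 5), e.2 = 0 ∧ e.1 < 0) ∧
      ((psiW ψ (U 5)).map Prod.fst).sum = -a ∧
      (∀ e ∈ psiW ψ (U 6), e.2 = 0 ∧ e.1 < 0) ∧
      ((psiW ψ (U 6)).map Prod.fst).sum = -b ∧
      U 7 = [] ∧ U 0 = []) :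
    ∃ q : ℚ, a = (q : ℝ) * b := by
  obtain ⟨A, -, inv, -, ψ, U, -, -, hU, -, ha, -, hb', h3, h4, -, -, -, -, h7, h0⟩ := halph
  have hcomm : U 1 ++ U 2 = U 2 ++ U 1 := hU.append_comm h0 h3 h4 h7
  let width : List A → ℝ := fun W => ((psiW ψ W).map Prod.fst).sum
  have hwidth (X Y : List A) : width (X ++ Y) = width X + width Y := by
    simp only [width, psiW_append, List.map_append, List.sum_append]
  obtain ⟨q, hq⟩ := List.exists_rat_eq_mul_of_append_comm width hwidth hcomm
    (by simp only [width, hb', hb.ne', ne_eq, not_false_eq_true])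
  exact ⟨q, by simpa only [width, ha, hb'] using hq⟩

/-- If the interleaved double chain of floating polylines
`F(a,b) = κ(a) : κ(b) : ε : ε : κ(a)⁻¹ : κ(b)⁻¹ : ε : ε` (where `κ(t)` is a
horizontal segment of length `t`) is alphabetisable over a finite alphabet with
reversal, then `a/b` is rational. -/
theorem stmt17 (a b : ℝ) (ha : 0 < a) (hb : 0 < b)
    (halph : ∃ (A : Type) (_ : Fintype A) (inv : A → A)
        (_ : Function.Involutive inv) (ψ : A → List (ℝ × ℝ)) (U : ZMod 8 → List A),
      (∀ w : A, ψ w ≠ []) ∧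
      (∀ w : A, ψ (inv w) = prev (ψ w)) ∧
      IDC inv U ∧
      (∀ e ∈ psiW ψ (U 1), e.2 = 0 ∧ 0 < e.1) ∧
      ((psiW ψ (U 1)).map Prod.fst).sum = a ∧
      (∀ e ∈ psiW ψ (U 2), e.2 = 0 ∧ 0 < e.1) ∧
      ((psiW ψ (U 2)).map Prod.fst).sum = b ∧
      U 3 = [] ∧ U 4 = [] ∧
      (∀ e ∈ psiW ψ (U 5), e.2 = 0 ∧ e.1 < 0) ∧
      ((psiW ψ (U 5)).map Prod.fst).sum = -a ∧
      (∀ e ∈ psiW ψ (U 6), e.2 = 0 ∧ e.1 < 0) ∧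
      ((psiW ψ (U 6)).map Prod.fst).sum = -b ∧
      U 7 = [] ∧ U 0 = []) :
    ∃ q : ℚ, a = (q : ℝ) * b :=
  stmt17_general a b hb halph
end
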